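/- arXiv:2205.11715 — 4 statements merged into one kernel-verified Lean document; each statement's English description precedes it below -/
import Mathlib

section
/- Reverse Grönwall inequality: if u, α, β : [A,B] → ℝ are continuous with u ≥ 0, α ≥ 0, β ≥ 0, and u(t) ≤ α(t) + ∫_t^B β(s) u(s) ds for all t ∈ [A,B], then u(t) ≤ α(t) + exp(∫_t^B β(τ) dτ) · ∫_t^B α(τ) β(τ) exp(−∫_τ^B β(s) ds) dτ for all t ∈ [A,B]. -/
/-!
With `I t = ∫_t^B β`, `V t = ∫_t^B β u` and the integrating factor `exp (-I)`, the hypothesis gives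
`(V · exp (-I))' = β exp (-I) (V - u) ≥ -α β exp (-I)`. Hence `V · exp (-I)` minus the primitive
`∫_t^B α β exp (-I)` is nondecreasing on `[A, B]`; it vanishes at `B`, so it is nonpositive, which
bounds `V t` and therefore `u t ≤ α t + V t`.
-/

open Set Real intervalIntegral

section IntegralToRightEndpoint

variable {f : ℝ → ℝ} {A B : ℝ}

theorem ContinuousOn.continuousOn_integral_to_right_endpoint (hf : ContinuousOn f (Icc A B)) :
    ContinuousOn (fun t => ∫ s in t..B, f s) (Icc A B) := by
  rcases le_total A B with hAB | hBA
  · rw [← uIcc_of_le hAB] at hf ⊢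
    exact continuousOn_primitive_interval_left (hf.integrableOn_compact isCompact_uIcc)
  · exact (subsingleton_Icc_of_ge hBA).continuousOn _

theorem ContinuousOn.hasDerivAt_integral_to_right_endpoint (hf : ContinuousOn f (Icc A B))
    {t : ℝ} (ht : t ∈ Ioo A B) : HasDerivAt (fun x => ∫ s in x..B, f s) (-f t) t := by
  have hsub : uIcc t B ⊆ Icc A B := by
    rw [uIcc_of_le ht.2.le]
    exact Icc_subset_Icc ht.1.le le_rfl
  exact integral_hasDerivAt_left ((hf.mono hsub).intervalIntegrable)
    ((hf.mono Ioo_subset_Icc_self).stronglyMeasurableAtFilter isOpen_Ioo t ht)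
    (hf.continuousAt (Icc_mem_nhds ht.1 ht.2))

end IntegralToRightEndpoint

section ReverseGronwall

variable {A B : ℝ} {u α β : ℝ → ℝ}

theorem monotoneOn_integral_mul_exp_neg_integral_sub_integral
    (hu : ContinuousOn u (Icc A B)) (hα : ContinuousOn α (Icc A B))
    (hβ : ContinuousOn β (Icc A B)) (hβ0 : ∀ t ∈ Icc A B, 0 ≤ β t)
    (hineq : ∀ t ∈ Icc A B, u t ≤ α t + ∫ s in t..B, β s * u s) :
    MonotoneOn (fun t => (∫ s in t..B, β s * u s) * exp (-∫ s in t..B, β s) -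
      ∫ τ in t..B, α τ * β τ * exp (-∫ s in τ..B, β s)) (Icc A B) := by
  set I : ℝ → ℝ := fun t => ∫ s in t..B, β s
  set V : ℝ → ℝ := fun t => ∫ s in t..B, β s * u s
  have hβu : ContinuousOn (fun s => β s * u s) (Icc A B) := hβ.mul hu
  have hE : ContinuousOn (fun t => exp (-I t)) (Icc A B) :=
    continuous_exp.comp_continuousOn hβ.continuousOn_integral_to_right_endpoint.neg
  have hαβE : ContinuousOn (fun τ => α τ * β τ * exp (-I τ)) (Icc A B) := (hα.mul hβ).mul hE
  have hderiv : ∀ t ∈ Ioo A B, HasDerivAt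
      (fun t => V t * exp (-I t) - ∫ τ in t..B, α τ * β τ * exp (-I τ))
      (β t * exp (-I t) * (α t + V t - u t)) t := fun t ht =>
    ((hβu.hasDerivAt_integral_to_right_endpoint ht).mul
      (hβ.hasDerivAt_integral_to_right_endpoint ht).neg.exp).sub
      (hαβE.hasDerivAt_integral_to_right_endpoint ht) |>.congr_deriv
      (by simp only [Pi.neg_apply, I, V]; ring)
  refine monotoneOn_of_hasDerivWithinAt_nonneg (convex_Icc A B)
    ((hβu.continuousOn_integral_to_right_endpoint.mul hE).sub
      hαβE.continuousOn_integral_to_right_endpoint)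
    (f' := fun t => β t * exp (-I t) * (α t + V t - u t)) (fun t ht => ?_) (fun t ht => ?_)
  · rw [interior_Icc] at ht
    exact (hderiv t ht).hasDerivWithinAt
  · have htIcc : t ∈ Icc A B := interior_subset ht
    exact mul_nonneg (mul_nonneg (hβ0 t htIcc) (exp_pos _).le)
      (sub_nonneg.2 (hineq t htIcc))

theorem integral_mul_le_exp_integral_mul_integral
    (hu : ContinuousOn u (Icc A B)) (hα : ContinuousOn α (Icc A B))
    (hβ : ContinuousOn β (Icc A B)) (hβ0 : ∀ t ∈ Icc A B, 0 ≤ β t)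
    (hineq : ∀ t ∈ Icc A B, u t ≤ α t + ∫ s in t..B, β s * u s) {t : ℝ} (ht : t ∈ Icc A B) :
    ∫ s in t..B, β s * u s ≤
      exp (∫ τ in t..B, β τ) * ∫ τ in t..B, α τ * β τ * exp (-(∫ s in τ..B, β s)) := by
  have hmono := monotoneOn_integral_mul_exp_neg_integral_sub_integral hu hα hβ hβ0 hineq ht
    (right_mem_Icc.2 (ht.1.trans ht.2)) ht.2
  simp only [integral_same, zero_mul, sub_zero, sub_nonpos] at hmono
  calc ∫ s in t..B, β s * u s
      = exp (∫ τ in t..B, β τ) * ((∫ s in t..B, β s * u s) * exp (-∫ s in t..B, β s)) := by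
        rw [mul_left_comm, ← exp_add, add_neg_cancel, exp_zero, mul_one]
    _ ≤ _ := mul_le_mul_of_nonneg_left hmono (exp_pos _).le

end ReverseGronwall

theorem reverse_gronwall_general
    (A B : ℝ) (u α β : ℝ → ℝ)
    (hu : ContinuousOn u (Set.Icc A B))
    (hα : ContinuousOn α (Set.Icc A B))
    (hβ : ContinuousOn β (Set.Icc A B))
    (hβ0 : ∀ t ∈ Set.Icc A B, 0 ≤ β t)
    (hineq : ∀ t ∈ Set.Icc A B, u t ≤ α t + ∫ s in t..B, β s * u s) :
    ∀ t ∈ Set.Icc A B,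
      u t ≤ α t + Real.exp (∫ τ in t..B, β τ) *
        ∫ τ in t..B, α τ * β τ * Real.exp (-(∫ s in τ..B, β s)) := fun t ht =>
  (hineq t ht).trans
    (add_le_add_right (integral_mul_le_exp_integral_mul_integral hu hα hβ hβ0 hineq ht) _)

/-- Reverse Grönwall inequality. -/
theorem reverse_gronwall
    (A B : ℝ) (hAB : A ≤ B) (u α β : ℝ → ℝ)
    (hu : ContinuousOn u (Set.Icc A B))
    (hα : ContinuousOn α (Set.Icc A B))
    (hβ : ContinuousOn β (Set.Icc A B))
    (hu0 : ∀ t ∈ Set.Icc A B, 0 ≤ u t)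
    (hα0 : ∀ t ∈ Set.Icc A B, 0 ≤ α t)
    (hβ0 : ∀ t ∈ Set.Icc A B, 0 ≤ β t)
    (hineq : ∀ t ∈ Set.Icc A B, u t ≤ α t + ∫ s in t..B, β s * u s) :
    ∀ t ∈ Set.Icc A B,
      u t ≤ α t + Real.exp (∫ τ in t..B, β τ) *
        ∫ τ in t..B, α τ * β τ * Real.exp (-(∫ s in τ..B, β s)) :=
  reverse_gronwall_general A B u α β hu hα hβ hβ0 hineq
end

section
/- Exponential-decay corollary of the reverse Grönwall inequality: let p > ε > 0, a ≥ 0, and let u : [A,B] → ℝ be continuous and nonnegative with u(t) ≤ a·e^{−pt} + ε ∫_t^B u(τ) dτ for all t ∈ [A,B]. Then u(t) ≤ (a·p/(p−ε))·e^{−pt} for all t ∈ [A,B]. -/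
/-!
With `v t = ∫_t^B u`, the hypothesis is the backward differential inequality
`-v' ≤ a e^{-pt} + ε v`. Multiplying by the integrating factor `e^{εt}` shows that
`e^{εt} v t - a/(p-ε) e^{(ε-p)t}` is nondecreasing on `[A, B]`; comparing with its value at `B`,
where `v` vanishes, gives `v t ≤ a/(p-ε) e^{-pt}`, and feeding this back into the hypothesis
gives `u t ≤ (a + ε a/(p-ε)) e^{-pt} = a p/(p-ε) e^{-pt}`.
-/

open Set Real intervalIntegral

section IntegralLeft

variable {u : ℝ → ℝ} {A B : ℝ}

theorem continuousOn_integral_left_of_continuousOn (hAB : A ≤ B) (hu : ContinuousOn u (Icc A B)) :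
    ContinuousOn (fun t => ∫ τ in t..B, u τ) (Icc A B) := by
  have hint : MeasureTheory.IntegrableOn u (uIcc A B) := by
    rw [uIcc_of_le hAB]
    exact hu.integrableOn_Icc
  simpa only [uIcc_of_le hAB] using continuousOn_primitive_interval_left hint

theorem hasDerivAt_integral_left_of_continuousOn (hu : ContinuousOn u (Icc A B)) {t : ℝ}
    (ht : t ∈ Ioo A B) : HasDerivAt (fun s => ∫ τ in s..B, u τ) (-u t) t :=
  integral_hasDerivAt_left
    ((hu.mono (Icc_subset_Icc_left ht.1.le)).intervalIntegrable_of_Icc ht.2.le)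
    ((hu.mono Ioo_subset_Icc_self).stronglyMeasurableAtFilter isOpen_Ioo t ht)
    (hu.continuousAt (Icc_mem_nhds ht.1 ht.2))

end IntegralLeft

theorem hasDerivAt_exp_const_mul (c t : ℝ) :
    HasDerivAt (fun s => exp (c * s)) (c * exp (c * t)) t := by
  convert ((hasDerivAt_id' t).const_mul c).exp using 1
  ring

theorem exp_sub_mul_eq_exp_mul_mul_exp_neg_mul (ε p t : ℝ) :
    exp ((ε - p) * t) = exp (ε * t) * exp (-p * t) := by
  rw [← exp_add]; ring_nf

section ReverseGronwall

variable {u : ℝ → ℝ} {A B a ε p : ℝ}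

theorem monotoneOn_exp_mul_integral_left_sub (hεp : ε ≠ p) (hAB : A ≤ B)
    (hu : ContinuousOn u (Icc A B))
    (hineq : ∀ t ∈ Icc A B, u t ≤ a * exp (-p * t) + ε * ∫ τ in t..B, u τ) :
    MonotoneOn (fun t => exp (ε * t) * (∫ τ in t..B, u τ) - a / (p - ε) * exp ((ε - p) * t))
      (Icc A B) := by
  have hpε : p - ε ≠ 0 := sub_ne_zero.2 hεp.symm
  refine monotoneOn_of_hasDerivWithinAt_nonneg (convex_Icc A B)
    (f' := fun t => exp (ε * t) * (ε * (∫ τ in t..B, u τ) - u t) + a * exp ((ε - p) * t))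
    ?_ (fun t ht => ?_) (fun t ht => ?_)
  · exact ((by fun_prop : Continuous fun t => exp (ε * t)).continuousOn.mul
      (continuousOn_integral_left_of_continuousOn hAB hu)).sub (by fun_prop)
  · rw [interior_Icc] at ht
    have hderiv := ((hasDerivAt_exp_const_mul ε t).mul
      (hasDerivAt_integral_left_of_continuousOn hu ht)).sub
      ((hasDerivAt_exp_const_mul (ε - p) t).const_mul (a / (p - ε)))
    refine (hderiv.congr_deriv ?_).hasDerivWithinAt
    field_simp
    ring
  · rw [interior_Icc] at ht
    have h := mul_le_mul_of_nonneg_left (hineq t (Ioo_subset_Icc_self ht)) (exp_pos (ε * t)).le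
    rw [exp_sub_mul_eq_exp_mul_mul_exp_neg_mul]
    linear_combination h

theorem exp_mul_integral_left_le_of_le_exp_add_mul_integral (hεp : ε ≠ p)
    (hu : ContinuousOn u (Icc A B))
    (hineq : ∀ t ∈ Icc A B, u t ≤ a * exp (-p * t) + ε * ∫ τ in t..B, u τ) {t : ℝ}
    (ht : t ∈ Icc A B) :
    exp (ε * t) * (∫ τ in t..B, u τ) ≤
      a / (p - ε) * (exp ((ε - p) * t) - exp ((ε - p) * B)) := by
  have hAB : A ≤ B := ht.1.trans ht.2
  have hmono := monotoneOn_exp_mul_integral_left_sub hεp hAB hu hineq ht (right_mem_Icc.2 hAB) ht.2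
  simp only [integral_same, mul_zero, zero_sub] at hmono
  linarith

end ReverseGronwall

theorem exp_decay_reverse_gronwall_general
    (A B a ε p : ℝ) (hε : 0 < ε) (hεp : ε < p) (ha : 0 ≤ a)
    (u : ℝ → ℝ)
    (hu : ContinuousOn u (Set.Icc A B))
    (hineq : ∀ t ∈ Set.Icc A B,
      u t ≤ a * Real.exp (-p * t) + ε * ∫ τ in t..B, u τ) :
    ∀ t ∈ Set.Icc A B, u t ≤ (a * p / (p - ε)) * Real.exp (-p * t) := by
  intro t ht
  have hpε : 0 < p - ε := sub_pos.2 hεp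
  have hv : (∫ τ in t..B, u τ) ≤ a / (p - ε) * exp (-p * t) := by
    refine le_of_mul_le_mul_left ?_ (exp_pos (ε * t))
    calc exp (ε * t) * (∫ τ in t..B, u τ)
        ≤ a / (p - ε) * (exp ((ε - p) * t) - exp ((ε - p) * B)) :=
          exp_mul_integral_left_le_of_le_exp_add_mul_integral hεp.ne hu hineq ht
      _ ≤ a / (p - ε) * exp ((ε - p) * t) := by
          gcongr
          exact sub_le_self _ (exp_pos _).le
      _ = exp (ε * t) * (a / (p - ε) * exp (-p * t)) := by
          rw [exp_sub_mul_eq_exp_mul_mul_exp_neg_mul]; ring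
  calc u t ≤ a * exp (-p * t) + ε * ∫ τ in t..B, u τ := hineq t ht
    _ ≤ a * exp (-p * t) + ε * (a / (p - ε) * exp (-p * t)) := by gcongr
    _ = (a * p / (p - ε)) * exp (-p * t) := by field_simp; ring

/-- Exponential-decay corollary of the reverse Grönwall inequality. -/
theorem exp_decay_reverse_gronwall
    (A B a ε p : ℝ) (hAB : A ≤ B) (hε : 0 < ε) (hεp : ε < p) (ha : 0 ≤ a)
    (u : ℝ → ℝ)
    (hu : ContinuousOn u (Set.Icc A B))
    (hu0 : ∀ t ∈ Set.Icc A B, 0 ≤ u t)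
    (hineq : ∀ t ∈ Set.Icc A B,
      u t ≤ a * Real.exp (-p * t) + ε * ∫ τ in t..B, u τ) :
    ∀ t ∈ Set.Icc A B, u t ≤ (a * p / (p - ε)) * Real.exp (-p * t) :=
  exp_decay_reverse_gronwall_general A B a ε p hε hεp ha u hu hineq
end

section
/- Picard existence with an integrable singular coefficient: let α ∈ [0,1), M ≥ 0, y₀ ∈ ℝ, and let F : (0,1] × ℝ → ℝ be continuous and satisfy |F(w,y) − F(w,z)| ≤ M w^{−α} |y − z| and |F(w,y₀)| ≤ M w^{−α} for all w ∈ (0,1] and y,z ∈ ℝ. Then there exists c ∈ (0,1] such that there is a unique continuous function y : [0,c] → ℝ with y(τ) = y₀ + ∫_0^τ F(w, y(w)) dw for all τ ∈ [0,c]. -/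
/-!
The sup-norm Picard argument survives a coefficient `L` that is merely integrable: the Picard
map `y ↦ y₀ + ∫_{(0,τ]} F(w, y w) dw` on `C([0,c], ℝ)` is Lipschitz with constant
`∫_{(0,c]} L`, and since a primitive of an integrable function is continuous, this constant is
below `1` once `c` is small. The weight `L w = M w^{-α}` is integrable because `α < 1`, so the
contraction estimate yields a fixed point and forces any two solutions to coincide.
-/

open MeasureTheory Set Filter Topology Function

theorem exists_setIntegral_Ioc_lt {L : ℝ → ℝ} {b ε : ℝ} (hb : 0 < b)
    (hL : IntegrableOn L (Ioc 0 b)) (hε : 0 < ε) : ∃ c ∈ Ioc 0 b, ∫ w in Ioc 0 c, L w < ε := by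
  have hcont : ContinuousWithinAt (fun c => ∫ w in Ioc 0 c, L w) (Ioc 0 b) 0 :=
    (intervalIntegral.continuousOn_primitive ((integrableOn_Icc_iff_integrableOn_Ioc).2 hL)
      0 (left_mem_Icc.2 hb.le)).mono Ioc_subset_Icc_self
  have hsmall : ∀ᶠ c in 𝓝[Ioc 0 b] 0, ∫ w in Ioc 0 c, L w < ε :=
    hcont.eventually (gt_mem_nhds (by simpa using hε))
  have : (𝓝[Ioc 0 b] (0 : ℝ)).NeBot :=
    mem_closure_iff_nhdsWithin_neBot.1 (by simp [closure_Ioc hb.ne, hb.le])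
  exact (hsmall.and self_mem_nhdsWithin).exists.imp fun c hc => ⟨hc.2, hc.1⟩

noncomputable def picardIntegral (F : ℝ → ℝ → ℝ) (y₀ : ℝ) (y : ℝ → ℝ) (τ : ℝ) : ℝ :=
  y₀ + ∫ w in Ioc 0 τ, F w (y w)

structure IsIntegrablePicardLindelof (F : ℝ → ℝ → ℝ) (y₀ : ℝ) (L : ℝ → ℝ) (c : ℝ) : Prop where
  continuousOn : ContinuousOn (uncurry F) (Ioc 0 c ×ˢ univ)
  integrableOn_base : IntegrableOn (fun w => F w y₀) (Ioc 0 c)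
  integrableOn_coeff : IntegrableOn L (Ioc 0 c)
  abs_sub_le : ∀ w ∈ Ioc 0 c, ∀ y z, |F w y - F w z| ≤ L w * |y - z|

namespace IsIntegrablePicardLindelof

variable {F : ℝ → ℝ → ℝ} {y₀ : ℝ} {L : ℝ → ℝ} {b c : ℝ}

theorem of_abs_le (hFc : ContinuousOn (uncurry F) (Ioc 0 c ×ˢ univ))
    (hL : IntegrableOn L (Ioc 0 c))
    (hLip : ∀ w ∈ Ioc 0 c, ∀ y z, |F w y - F w z| ≤ L w * |y - z|)
    (hbd : ∀ w ∈ Ioc 0 c, |F w y₀| ≤ L w) : IsIntegrablePicardLindelof F y₀ L c where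
  continuousOn := hFc
  integrableOn_base := by
    refine hL.mono' ?_ (ae_restrict_of_forall_mem measurableSet_Ioc hbd)
    exact (hFc.comp (continuousOn_id.prodMk continuousOn_const) fun w hw => ⟨hw, trivial⟩)
      |>.aestronglyMeasurable measurableSet_Ioc
  integrableOn_coeff := hL
  abs_sub_le := hLip

theorem mono (h : IsIntegrablePicardLindelof F y₀ L b) (hcb : c ≤ b) :
    IsIntegrablePicardLindelof F y₀ L c where
  continuousOn := h.continuousOn.mono (prod_mono (Ioc_subset_Ioc_right hcb) subset_rfl)
  integrableOn_base := h.integrableOn_base.mono_set (Ioc_subset_Ioc_right hcb)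
  integrableOn_coeff := h.integrableOn_coeff.mono_set (Ioc_subset_Ioc_right hcb)
  abs_sub_le w hw := h.abs_sub_le w (Ioc_subset_Ioc_right hcb hw)

theorem coeff_nonneg (h : IsIntegrablePicardLindelof F y₀ L c) {w : ℝ} (hw : w ∈ Ioc 0 c) :
    0 ≤ L w := by
  simpa using (abs_nonneg _).trans (h.abs_sub_le w hw 1 0)

theorem integrableOn_comp (h : IsIntegrablePicardLindelof F y₀ L c) {y : ℝ → ℝ}
    (hy : ContinuousOn y (Icc 0 c)) :
    IntegrableOn (fun w => F w (y w)) (Ioc 0 c) := by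
  obtain ⟨B, hB⟩ := isCompact_Icc.exists_bound_of_continuousOn hy
  have hmeas : AEStronglyMeasurable (fun w => F w (y w)) (volume.restrict (Ioc 0 c)) :=
    (h.continuousOn.comp (continuousOn_id.prodMk (hy.mono Ioc_subset_Icc_self))
      fun w hw => ⟨hw, trivial⟩).aestronglyMeasurable measurableSet_Ioc
  refine (h.integrableOn_base.norm.add (h.integrableOn_coeff.mul_const (B + |y₀|))).mono' hmeas
    (ae_restrict_of_forall_mem measurableSet_Ioc fun w hw => ?_)
  have hyw : |y w - y₀| ≤ B + |y₀| :=
    (abs_sub _ _).trans (by gcongr; exact hB w (Ioc_subset_Icc_self hw))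
  calc ‖F w (y w)‖ ≤ ‖F w y₀‖ + ‖F w (y w) - F w y₀‖ := norm_le_norm_add_norm_sub' _ _
    _ ≤ ‖F w y₀‖ + L w * (B + |y₀|) := by
        rw [Real.norm_eq_abs (F w (y w) - F w y₀)]
        gcongr
        exact (h.abs_sub_le w hw _ _).trans (mul_le_mul_of_nonneg_left hyw (h.coeff_nonneg hw))

theorem continuousOn_picardIntegral (h : IsIntegrablePicardLindelof F y₀ L c) {y : ℝ → ℝ}
    (hy : ContinuousOn y (Icc 0 c)) :
    ContinuousOn (picardIntegral F y₀ y) (Icc 0 c) :=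
  continuousOn_const.add <| intervalIntegral.continuousOn_primitive <|
    (integrableOn_Icc_iff_integrableOn_Ioc).2 (h.integrableOn_comp hy)

theorem abs_picardIntegral_sub_le (h : IsIntegrablePicardLindelof F y₀ L c) {y z : ℝ → ℝ}
    (hy : ContinuousOn y (Icc 0 c)) (hz : ContinuousOn z (Icc 0 c)) {d : ℝ}
    (hd : ∀ w ∈ Icc 0 c, |y w - z w| ≤ d) {τ : ℝ} (hτ : τ ∈ Icc 0 c) :
    |picardIntegral F y₀ y τ - picardIntegral F y₀ z τ| ≤ (∫ w in Ioc 0 c, L w) * d := by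
  have hsub : Ioc 0 τ ⊆ Ioc 0 c := Ioc_subset_Ioc_right hτ.2
  have hd0 : 0 ≤ d := (abs_nonneg _).trans (hd τ hτ)
  have hpt : ∀ w ∈ Ioc 0 τ, ‖F w (y w) - F w (z w)‖ ≤ L w * d := fun w hw =>
    (h.abs_sub_le w (hsub hw) _ _).trans <| mul_le_mul_of_nonneg_left
      (hd w (Ioc_subset_Icc_self (hsub hw))) (h.coeff_nonneg (hsub hw))
  calc |picardIntegral F y₀ y τ - picardIntegral F y₀ z τ|
        = ‖∫ w in Ioc 0 τ, (F w (y w) - F w (z w))‖ := by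
          rw [picardIntegral, picardIntegral, add_sub_add_left_eq_sub, Real.norm_eq_abs,
            integral_sub ((h.integrableOn_comp hy).mono_set hsub)
              ((h.integrableOn_comp hz).mono_set hsub)]
    _ ≤ ∫ w in Ioc 0 τ, L w * d :=
        norm_integral_le_of_norm_le ((h.integrableOn_coeff.mono_set hsub).mul_const d)
          (ae_restrict_of_forall_mem measurableSet_Ioc hpt)
    _ = (∫ w in Ioc 0 τ, L w) * d := integral_mul_const d L
    _ ≤ (∫ w in Ioc 0 c, L w) * d := mul_le_mul_of_nonneg_right (setIntegral_mono_set
        h.integrableOn_coeff (ae_restrict_of_forall_mem measurableSet_Ioc fun _ => h.coeff_nonneg)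
        hsub.eventuallyLE) hd0

theorem exists_solution (h : IsIntegrablePicardLindelof F y₀ L c) (hc : 0 ≤ c)
    (hL1 : ∫ w in Ioc 0 c, L w < 1) :
    ∃ y, ContinuousOn y (Icc 0 c) ∧ ∀ τ ∈ Icc 0 c, y τ = picardIntegral F y₀ y τ := by
  have : Nonempty (Icc 0 c) := ⟨⟨0, left_mem_Icc.2 hc⟩⟩
  have hext (f : C(Icc 0 c, ℝ)) : ContinuousOn (IccExtend hc f) (Icc 0 c) :=
    f.continuous.Icc_extend'.continuousOn
  let T : C(Icc 0 c, ℝ) → C(Icc 0 c, ℝ) := fun f =>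
    ⟨(Icc 0 c).domRestrict (picardIntegral F y₀ (IccExtend hc f)),
      (h.continuousOn_picardIntegral (hext f)).domRestrict⟩
  have hT : ContractingWith (∫ w in Ioc 0 c, L w).toNNReal T := by
    refine ⟨by simpa using hL1, LipschitzWith.of_dist_le_mul fun f g => ?_⟩
    refine (ContinuousMap.dist_le_iff_of_nonempty.2 fun t => ?_).trans
      (mul_le_mul_of_nonneg_right (Real.le_coe_toNNReal _) dist_nonneg)
    refine h.abs_picardIntegral_sub_le (hext f) (hext g) (fun w hw => ?_) t.2
    rw [IccExtend_of_mem hc f hw, IccExtend_of_mem hc g hw]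
    exact ContinuousMap.dist_apply_le_dist (f := f) (g := g) _
  let f : C(Icc 0 c, ℝ) := ContractingWith.fixedPoint T hT
  refine ⟨IccExtend hc f, hext f, fun τ hτ => ?_⟩
  rw [IccExtend_of_mem hc f hτ]
  exact (DFunLike.congr_fun hT.fixedPoint_isFixedPt ⟨τ, hτ⟩).symm

theorem eqOn_of_solutions (h : IsIntegrablePicardLindelof F y₀ L c)
    (hL1 : ∫ w in Ioc 0 c, L w < 1) {y z : ℝ → ℝ}
    (hy : ContinuousOn y (Icc 0 c)) (hyP : ∀ τ ∈ Icc 0 c, y τ = picardIntegral F y₀ y τ)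
    (hz : ContinuousOn z (Icc 0 c)) (hzP : ∀ τ ∈ Icc 0 c, z τ = picardIntegral F y₀ z τ) :
    EqOn y z (Icc 0 c) := by
  let Y : C(Icc 0 c, ℝ) := ⟨_, hy.domRestrict⟩
  let Z : C(Icc 0 c, ℝ) := ⟨_, hz.domRestrict⟩
  have hd : ∀ w ∈ Icc 0 c, |y w - z w| ≤ dist Y Z := fun w hw =>
    ContinuousMap.dist_apply_le_dist (f := Y) (g := Z) ⟨w, hw⟩
  have hq : 0 ≤ ∫ w in Ioc 0 c, L w :=
    setIntegral_nonneg measurableSet_Ioc fun _ => h.coeff_nonneg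
  have hcontr : dist Y Z ≤ (∫ w in Ioc 0 c, L w) * dist Y Z := by
    refine (ContinuousMap.dist_le (by positivity)).2 fun t => ?_
    change |y t - z t| ≤ _
    rw [hyP t t.2, hzP t t.2]
    exact h.abs_picardIntegral_sub_le hy hz hd t.2
  have hYZ : dist Y Z = 0 := le_antisymm (by nlinarith [dist_nonneg (x := Y) (y := Z)])
    dist_nonneg
  intro τ hτ
  simpa [hYZ, sub_eq_zero] using hd τ hτ

end IsIntegrablePicardLindelof

theorem picard_singular_coefficient_general
    (α M y₀ : ℝ) (hα1 : α < 1) (F : ℝ → ℝ → ℝ)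
    (hFc : ContinuousOn (fun p : ℝ × ℝ => F p.1 p.2) (Set.Ioc 0 1 ×ˢ Set.univ))
    (hLip : ∀ w ∈ Set.Ioc (0:ℝ) 1, ∀ y z : ℝ,
      |F w y - F w z| ≤ M * w ^ (-α) * |y - z|)
    (hbd : ∀ w ∈ Set.Ioc (0:ℝ) 1, |F w y₀| ≤ M * w ^ (-α)) :
    ∃ c ∈ Set.Ioc (0:ℝ) 1,
      (∃ y : ℝ → ℝ, ContinuousOn y (Set.Icc 0 c) ∧
        ∀ τ ∈ Set.Icc 0 c, y τ = y₀ + ∫ w in Set.Ioc 0 τ, F w (y w)) ∧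
      (∀ y z : ℝ → ℝ,
        ContinuousOn y (Set.Icc 0 c) →
        (∀ τ ∈ Set.Icc 0 c, y τ = y₀ + ∫ w in Set.Ioc 0 τ, F w (y w)) →
        ContinuousOn z (Set.Icc 0 c) →
        (∀ τ ∈ Set.Icc 0 c, z τ = y₀ + ∫ w in Set.Ioc 0 τ, F w (z w)) →
        Set.EqOn y z (Set.Icc 0 c)) := by
  have hweight : IntegrableOn (fun w : ℝ => M * w ^ (-α)) (Ioc 0 1) :=
    (intervalIntegral.intervalIntegrable_rpow' (a := 0) (b := 1) (by linarith)).1.const_mul M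
  obtain ⟨c, hc, hc1⟩ := exists_setIntegral_Ioc_lt one_pos hweight one_pos
  have h := (IsIntegrablePicardLindelof.of_abs_le hFc hweight hLip hbd).mono hc.2
  exact ⟨c, hc, h.exists_solution hc.1.le hc1, fun _ _ => h.eqOn_of_solutions hc1⟩

/-- Picard existence with an integrable singular coefficient. -/
theorem picard_singular_coefficient
    (α M y₀ : ℝ) (hα0 : 0 ≤ α) (hα1 : α < 1) (hM : 0 ≤ M) (F : ℝ → ℝ → ℝ)
    (hFc : ContinuousOn (fun p : ℝ × ℝ => F p.1 p.2) (Set.Ioc 0 1 ×ˢ Set.univ))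
    (hLip : ∀ w ∈ Set.Ioc (0:ℝ) 1, ∀ y z : ℝ,
      |F w y - F w z| ≤ M * w ^ (-α) * |y - z|)
    (hbd : ∀ w ∈ Set.Ioc (0:ℝ) 1, |F w y₀| ≤ M * w ^ (-α)) :
    ∃ c ∈ Set.Ioc (0:ℝ) 1,
      (∃ y : ℝ → ℝ, ContinuousOn y (Set.Icc 0 c) ∧
        ∀ τ ∈ Set.Icc 0 c, y τ = y₀ + ∫ w in Set.Ioc 0 τ, F w (y w)) ∧
      (∀ y z : ℝ → ℝ,
        ContinuousOn y (Set.Icc 0 c) →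
        (∀ τ ∈ Set.Icc 0 c, y τ = y₀ + ∫ w in Set.Ioc 0 τ, F w (y w)) →
        ContinuousOn z (Set.Icc 0 c) →
        (∀ τ ∈ Set.Icc 0 c, z τ = y₀ + ∫ w in Set.Ioc 0 τ, F w (z w)) →
        Set.EqOn y z (Set.Icc 0 c)) :=
  picard_singular_coefficient_general α M y₀ hα1 F hFc hLip hbd
end

section
/- Nonlinear degenerate transport estimate: let 0 < A < q < 1, c ∈ (0,1], and let v̂ : (0,c] → ℝ be differentiable with v̂(c) = c, solving −v·v̂'(v) + v̂(v) = H(v̂(v)) on (0,c], where H : ℝ → ℝ satisfies |H(x)| ≤ A|x| for all x. Assume additionally that |v̂(v)| ≤ 2v for all v ∈ (0,c]. Then |v̂(v) − v| ≤ 3A·(1/(q−A))·v^{1−q}·c^{q} for all v ∈ (0,c]. -/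
open Set Filter Topology

/-- Barrier lemma: if `d c > 0` and `d' v < 0` whenever `d v ≤ 0` on the interior,
then `d > 0` on `Ioc 0 c`. -/
lemma barrier_pos {c : ℝ} (hc : 0 < c) {d d' : ℝ → ℝ}
    (hd : ∀ v ∈ Set.Ioc 0 c, HasDerivWithinAt d (d' v) (Set.Ioc 0 c) v)
    (hdc : 0 < d c)
    (hneg : ∀ v ∈ Set.Ioo 0 c, d v ≤ 0 → d' v < 0) :
    ∀ v ∈ Set.Ioc 0 c, 0 < d v := by
  intro v0 hv0
  by_contra hcon
  push_neg at hcon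
  have hv0c : v0 < c := lt_of_le_of_ne hv0.2 (by rintro rfl; linarith)
  have hcont : ContinuousOn d (Set.Ioc 0 c) := fun x hx => (hd x hx).continuousWithinAt
  have hIcc_sub : Set.Icc v0 c ⊆ Set.Ioc 0 c := fun x hx =>
    ⟨lt_of_lt_of_le hv0.1 hx.1, hx.2⟩
  set S : Set ℝ := Set.Icc v0 c ∩ d ⁻¹' (Set.Iic 0) with hS
  have hSclosed : IsClosed S :=
    (hcont.mono hIcc_sub).preimage_isClosed_of_isClosed isClosed_Icc isClosed_Iic
  have hSne : S.Nonempty := ⟨v0, ⟨le_rfl, hv0c.le⟩, hcon⟩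
  have hSbdd : BddAbove S := ⟨c, fun x hx => hx.1.2⟩
  obtain ⟨v1, hv1S, hub⟩ : ∃ v1, v1 ∈ S ∧ ∀ x ∈ S, x ≤ v1 :=
    ⟨sSup S, hSclosed.csSup_mem hSne hSbdd, fun x hx => le_csSup hSbdd hx⟩
  have hv1le : d v1 ≤ 0 := hv1S.2
  have hv1pos : 0 < v1 := lt_of_lt_of_le hv0.1 hv1S.1.1
  have hv1c : v1 < c := lt_of_le_of_ne hv1S.1.2 (by rintro rfl; linarith)
  have hv1mem : v1 ∈ Set.Ioc 0 c := ⟨hv1pos, hv1c.le⟩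
  -- everything strictly to the right of v1 is positive
  have hgt : ∀ t ∈ Set.Ioc v1 c, 0 < d t := by
    intro t ht
    by_contra htc
    push_neg at htc
    have htS : t ∈ S := ⟨⟨le_trans hv1S.1.1 ht.1.le, ht.2⟩, htc⟩
    exact absurd (hub t htS) (not_le.mpr ht.1)
  -- deduce d' v1 ≥ 0 from right slopes
  have htend := (hd v1 hv1mem)
  rw [hasDerivWithinAt_iff_tendsto_slope] at htend
  have hsub : Set.Ioc v1 c ⊆ Set.Ioc 0 c \ {v1} := by
    intro t ht
    exact ⟨⟨lt_trans hv1pos ht.1, ht.2⟩, ne_of_gt ht.1⟩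
  have hle : 𝓝[Set.Ioc v1 c] v1 ≤ 𝓝[Set.Ioc 0 c \ {v1}] v1 := nhdsWithin_mono _ hsub
  have hclos : v1 ∈ closure (Set.Ioc v1 c) := by
    rw [closure_Ioc hv1c.ne]
    exact ⟨le_rfl, hv1c.le⟩
  haveI hne : (𝓝[Set.Ioc v1 c] v1).NeBot := mem_closure_iff_nhdsWithin_neBot.mp hclos
  have hd'nonneg : 0 ≤ d' v1 := by
    refine ge_of_tendsto (htend.mono_left hle) ?_
    filter_upwards [self_mem_nhdsWithin] with t ht
    have h1 : 0 < d t := hgt t ht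
    have h2 : 0 < t - v1 := sub_pos.mpr ht.1
    have : slope d v1 t = (d t - d v1) / (t - v1) := by
      rw [slope_def_field]
    rw [this]
    exact div_nonneg (by linarith) h2.le
  have := hneg v1 ⟨hv1pos, hv1c⟩ hv1le
  linarith

/-- Nonlinear degenerate transport estimate. -/
theorem nonlinear_degenerate_transport
    (A q c : ℝ) (hA : 0 < A) (hAq : A < q) (hq1 : q < 1)
    (hc : c ∈ Set.Ioc (0:ℝ) 1)
    (vhat vhatd H : ℝ → ℝ)
    (hend : vhat c = c)
    (hderiv : ∀ v ∈ Set.Ioc 0 c, HasDerivWithinAt vhat (vhatd v) (Set.Ioc 0 c) v)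
    (heq : ∀ v ∈ Set.Ioc 0 c, -v * vhatd v + vhat v = H (vhat v))
    (hH : ∀ x : ℝ, |H x| ≤ A * |x|)
    (hbd : ∀ v ∈ Set.Ioc 0 c, |vhat v| ≤ 2 * v) :
    ∀ v ∈ Set.Ioc 0 c,
      |vhat v - v| ≤ 3 * A * (1 / (q - A)) * v ^ (1 - q) * c ^ q := by
  obtain ⟨hc0, hc1⟩ := hc
  have hqA : 0 < q - A := sub_pos.mpr hAq
  set C : ℝ := 3 * A * (1 / (q - A)) * c ^ q with hC
  have hcq : (0:ℝ) < c ^ q := Real.rpow_pos_of_pos hc0 q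
  have hCpos : 0 < C := by
    apply mul_pos
    apply mul_pos (by linarith)
    · exact one_div_pos.mpr hqA
    · exact hcq
  -- rpow facts for v ∈ Ioc 0 c
  have key : ∀ v ∈ Set.Ioc (0:ℝ) c, ∀ s : ℝ,
      (s ≤ 0 → C * v ^ (1 - q) - s ≤ 0 ∨ C * v ^ (1 - q) + s ≤ 0 → True) := by
    intro _ _ _ _ _; trivial
  clear key
  -- main facts at an interior contact point
  have main : ∀ v ∈ Set.Ioo (0:ℝ) c,
      (2 * A < q * (C * v ^ (-q : ℝ))) ∧ v ^ (1 - q) = v * v ^ (-q : ℝ) ∧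
      (1 - q - 1 : ℝ) = -q := by
    intro v hv
    have hv0 : (0:ℝ) < v := hv.1
    have hP : (0:ℝ) < v ^ (-q : ℝ) := Real.rpow_pos_of_pos hv0 _
    have hvq : v ^ q ≤ c ^ q := Real.rpow_le_rpow hv0.le hv.2.le (by linarith)
    have hvqpos : (0:ℝ) < v ^ q := Real.rpow_pos_of_pos hv0 q
    have hPinv : v ^ (-q : ℝ) = (v ^ q)⁻¹ := Real.rpow_neg hv0.le q
    have hone : (1:ℝ) ≤ c ^ q * v ^ (-q : ℝ) := by
      rw [hPinv, ← div_eq_mul_inv]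
      exact (one_le_div hvqpos).mpr hvq
    refine ⟨?_, ?_, by ring⟩
    · have : q * C * (c ^ q * v ^ (-q : ℝ))⁻¹ * (c ^ q * v ^ (-q : ℝ)) =
          q * C := by
        field_simp
      have h2 : 3 * A * (q / (q - A)) ≤ q * (C * v ^ (-q : ℝ)) := by
        have : q * (C * v ^ (-q : ℝ)) = (3 * A * (q / (q - A))) * (c ^ q * v ^ (-q : ℝ)) := by
          rw [hC]; field_simp
        rw [this]
        nlinarith [mul_pos hA (mul_pos (div_pos (by linarith : (0:ℝ) < q) hqA) hcq)]
      have h3 : 3 * A < 3 * A * (q / (q - A)) := by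
        have : 1 < q / (q - A) := (one_lt_div hqA).mpr (by linarith)
        nlinarith
      linarith
    · calc v ^ (1 - q) = v ^ ((1:ℝ) + -q) := by rw [sub_eq_add_neg]
        _ = v ^ (1:ℝ) * v ^ (-q:ℝ) := Real.rpow_add hv0 _ _
        _ = v * v ^ (-q:ℝ) := by rw [Real.rpow_one]
  -- the two barrier functions
  have hbarrier : ∀ ε : ℝ, ε = 1 ∨ ε = -1 →
      ∀ v ∈ Set.Ioc 0 c, 0 < C * v ^ (1 - q) - ε * (vhat v - v) := by
    intro ε hε
    apply barrier_pos hc0 (d' := fun v => C * ((1 - q) * v ^ (1 - q - 1)) - ε * (vhatd v - 1))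
    · intro v hv
      have hrpow : HasDerivAt (fun x : ℝ => x ^ (1 - q)) ((1 - q) * v ^ (1 - q - 1)) v :=
        Real.hasDerivAt_rpow_const (Or.inl (ne_of_gt hv.1))
      have h1 : HasDerivWithinAt (fun x : ℝ => C * x ^ (1 - q))
          (C * ((1 - q) * v ^ (1 - q - 1))) (Set.Ioc 0 c) v :=
        (hrpow.hasDerivWithinAt).const_mul C
      have h2 : HasDerivWithinAt (fun x : ℝ => ε * (vhat x - x))
          (ε * (vhatd v - 1)) (Set.Ioc 0 c) v :=
        (((hderiv v hv).sub (hasDerivWithinAt_id v _))).const_mul ε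
      exact h1.sub h2
    · have : C * c ^ (1 - q) - ε * (vhat c - c) = C * c ^ (1 - q) := by
        rw [hend]; ring
      rw [this]
      exact mul_pos hCpos (Real.rpow_pos_of_pos hc0 _)
    · intro v hv hdle
      obtain ⟨hkey, hsplit, hexp⟩ := main v hv
      have hv' : v ∈ Set.Ioc 0 c := ⟨hv.1, hv.2.le⟩
      have hv0 : (0:ℝ) < v := hv.1
      set P := v ^ (-q : ℝ) with hPdef
      have hP : 0 < P := Real.rpow_pos_of_pos hv0 _
      -- bound on H
      have hHabs : |H (vhat v)| ≤ 2 * A * v := by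
        calc |H (vhat v)| ≤ A * |vhat v| := hH _
          _ ≤ A * (2 * v) := by
              have := hbd v hv'
              nlinarith
          _ = 2 * A * v := by ring
      have hHub : H (vhat v) ≤ 2 * A * v := le_trans (le_abs_self _) hHabs
      have hHlb : -(2 * A * v) ≤ H (vhat v) := neg_le_of_abs_le hHabs
      -- from the ODE: v * (vhatd v - 1) = (vhat v - v) - H (vhat v)
      have heqv := heq v hv'
      have hode : v * (vhatd v - 1) = (vhat v - v) - H (vhat v) := by linarith
      -- from contact: C * v ^ (1-q) ≤ ε * (vhat v - v)
      have hlow : C * (v * P) ≤ ε * (vhat v - v) := by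
        rw [← hsplit]; linarith
      -- deduce ε * (vhatd v - 1) ≥ C * P - 2 * A
      have hstep : C * P - 2 * A ≤ ε * (vhatd v - 1) := by
        have hmul : v * (C * P - 2 * A) ≤ v * (ε * (vhatd v - 1)) := by
          have : v * (ε * (vhatd v - 1)) = ε * ((vhat v - v) - H (vhat v)) := by
            rw [← hode]; ring
          rw [this]
          rcases hε with rfl | rfl
          · nlinarith
          · nlinarith
        exact le_of_mul_le_mul_left hmul hv0
      -- conclude
      have hrw : (v : ℝ) ^ (1 - q - 1 : ℝ) = P := by rw [hexp]
      rw [hrw]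
      nlinarith
  intro v hv
  have h1 := hbarrier 1 (Or.inl rfl) v hv
  have h2 := hbarrier (-1) (Or.inr rfl) v hv
  have habs : |vhat v - v| ≤ C * v ^ (1 - q) := by
    rw [abs_le]
    constructor <;> nlinarith
  calc |vhat v - v| ≤ C * v ^ (1 - q) := habs
    _ = 3 * A * (1 / (q - A)) * v ^ (1 - q) * c ^ q := by rw [hC]; ring
end
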